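/- Let (X,·,d) be a group which is metric invariant. Then for every Katetov map f ∈ 𝒦(X) and all a,b ∈ X, f(a·b) = inf { φ(a) + ψ(b) : φ, ψ ∈ 𝒦(X), φ ⊕ ψ = f }. -/

import Mathlib

/-- The inf-convolution of two real-valued functions on a group:
`(f ⊕ g)(x) = inf { f y + g z : y * z = x }`. -/
noncomputable def infConv {X : Type*} [Mul X] (f g : X → ℝ) : X → ℝ :=
  fun x => sInf {r : ℝ | ∃ y z : X, y * z = x ∧ r = f y + g z}

/-- A Katetov map: `|f x − f y| ≤ d(x,y) ≤ f x + f y` for all `x, y`. -/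
def IsKatetov {X : Type*} [MetricSpace X] (f : X → ℝ) : Prop :=
  ∀ x y : X, |f x - f y| ≤ dist x y ∧ dist x y ≤ f x + f y

/-!
Fix `b`. The pair `φ x = f (x * b)`, `ψ z = d(z, b)` decomposes `f`: `φ ⊕ ψ ≤ f` by taking
`y = x * b⁻¹, z = b`, and `f (y * z) ≤ f (y * b) + d(y * z, y * b) = φ y + ψ z` by left invariance.
Its value at `(a, b)` is `f (a * b)`, while every decomposition gives
`f (a * b) = (φ ⊕ ψ) (a * b) ≤ φ a + ψ b`.
-/

section Katetov

variable {X : Type*} [MetricSpace X]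

lemma IsKatetov.nonneg {f : X → ℝ} (hf : IsKatetov f) (x : X) : 0 ≤ f x := by
  have h := (hf x x).2
  rw [dist_self] at h
  linarith

lemma IsKatetov.comp_isometry {Y : Type*} [MetricSpace Y] {f : X → ℝ} (hf : IsKatetov f)
    {g : Y → X} (hg : Isometry g) : IsKatetov (f ∘ g) := by
  intro x y
  simpa only [Function.comp_apply, hg.dist_eq] using hf (g x) (g y)

lemma isKatetov_dist_left (b : X) : IsKatetov (fun z => dist z b) := fun x y =>
  ⟨abs_dist_sub_le x y b, (dist_triangle x b y).trans_eq (by rw [dist_comm b y])⟩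

end Katetov

section InfConv

variable {X : Type*} [MulOneClass X] {f g : X → ℝ}

lemma infConv_le_add (hf : 0 ≤ f) (hg : 0 ≤ g) (y z : X) : infConv f g (y * z) ≤ f y + g z :=
  csInf_le ⟨0, by rintro r ⟨y', z', -, rfl⟩; exact add_nonneg (hf y') (hg z')⟩ ⟨y, z, rfl, rfl⟩

lemma le_infConv {c : ℝ} {x : X} (h : ∀ y z, y * z = x → c ≤ f y + g z) : c ≤ infConv f g x :=
  le_csInf ⟨f x + g 1, x, 1, mul_one x, rfl⟩ (by rintro r ⟨y, z, hyz, rfl⟩; exact h y z hyz)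

end InfConv

lemma infConv_mul_right_dist {X : Type*} [Group X] [MetricSpace X]
    (hleft : ∀ x y z : X, dist (x * y) (x * z) = dist y z)
    {f : X → ℝ} (hf : IsKatetov f) (b : X) :
    infConv (fun x => f (x * b)) (fun z => dist z b) = f := by
  funext x
  apply le_antisymm
  · simpa using infConv_le_add (fun y => hf.nonneg (y * b))
      (fun z => (dist_nonneg : 0 ≤ dist z b)) (x * b⁻¹) b
  · refine le_infConv fun y z hyz => ?_
    have hlip := (abs_le.1 (hf (y * z) (y * b)).1).2
    rw [hleft, hyz] at hlip
    linarith

/-- on a metric invariant group, every Katetov map `f` satisfies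
`f(a·b) = inf { φ(a) + ψ(b) : φ, ψ ∈ 𝒦(X), φ ⊕ ψ = f }` for all `a, b ∈ X`. -/
theorem katetov_value_eq_sInf_decompositions {X : Type*} [Group X] [MetricSpace X]
    (hleft : ∀ x y z : X, dist (x * y) (x * z) = dist y z)
    (hright : ∀ x y z : X, dist (y * x) (z * x) = dist y z)
    (f : X → ℝ) (hf : IsKatetov f) (a b : X) :
    f (a * b) = sInf {r : ℝ | ∃ φ ψ : X → ℝ,
      IsKatetov φ ∧ IsKatetov ψ ∧ infConv φ ψ = f ∧ r = φ a + ψ b} := by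
  have hφ : IsKatetov (fun x => f (x * b)) :=
    hf.comp_isometry (Isometry.of_dist_eq fun x y => hright b x y)
  have hdecomp := infConv_mul_right_dist hleft hf b
  apply le_antisymm
  · refine le_csInf ⟨_, _, _, hφ, isKatetov_dist_left b, hdecomp, rfl⟩ ?_
    rintro r ⟨φ, ψ, hφ', hψ', rfl, rfl⟩
    exact infConv_le_add hφ'.nonneg hψ'.nonneg a b
  · refine csInf_le ⟨0, ?_⟩ ⟨_, _, hφ, isKatetov_dist_left b, hdecomp, by simp⟩
    rintro r ⟨φ, ψ, hφ', hψ', -, rfl⟩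
    exact add_nonneg (hφ'.nonneg a) (hψ'.nonneg b)
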